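/- arXiv:1606.03340 — 3 statements merged into one kernel-verified Lean document; each statement's English description precedes it below -/
import Mathlib

section
/- Let (X,d) be a metric space, μ a locally finite Borel measure, α ≥ 200, and let D be a David–Mattila lattice with parameters C_0, A_0. Define the maximal operator M_μ f(x) := sup over cells Q ∈ D with x ∈ Q of A(f,Q), where A(f,Q) := μ(αB(Q))^{−1}∫_{30B(Q)}|f|dμ. Then M_μ has weak type (1,1) with an absolute constant: μ{x : M_μ f(x) > t} ≤ C·‖f‖_{L¹(μ)}/t for all f ∈ L¹(μ) and t > 0. -/
open MeasureTheory Metric Set ENNReal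

noncomputable section

variable {X : Type*} [MetricSpace X] [MeasurableSpace X] [BorelSpace X]

/-- The support of a measure on a metric space: points all of whose balls have
positive measure. -/
def msupport (μ : Measure X) : Set X := {x | ∀ r : ℝ, 0 < r → 0 < μ (ball x r)}

/-- `(X, d, μ)` is upper doubling with dominating function `lam` and constant `Cl`. -/
structure IsUpperDoubling (μ : Measure X) (lam : X → ℝ → ℝ) (Cl : ℝ) : Prop where
  one_lt : 1 < Cl
  lam_pos : ∀ x r, 0 < r → 0 < lam x r
  lam_mono : ∀ x r₁ r₂, 0 < r₁ → r₁ ≤ r₂ → lam x r₁ ≤ lam x r₂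
  measure_le : ∀ x r, 0 < r → μ (ball x r) ≤ ENNReal.ofReal (lam x r)
  halving : ∀ x r, 0 < r → lam x r ≤ Cl * lam x (r / 2)
  close : ∀ x y r, 0 < r → dist x y ≤ r → lam x r ≤ Cl * lam y r

/-- `(X, d)` is geometrically doubling with constant `C` and doubling dimension `n`:
every `r`-separated subset of a ball of radius `R ≥ r` has cardinality at most `C (R/r)^n`. -/
def GeometricallyDoubling (X : Type*) [MetricSpace X] (C : ℝ) (n : ℕ) : Prop :=
  ∀ (x : X) (R r : ℝ), 0 < r → r ≤ R →
    ∀ S : Finset X, (↑S : Set X) ⊆ ball x R →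
      (∀ a ∈ S, ∀ b ∈ S, a ≠ b → r ≤ dist a b) → (S.card : ℝ) ≤ C * (R / r) ^ n

/-- `ω` is a Dini modulus of continuity. -/
structure IsDiniModulus (ω : ℝ → ℝ) : Prop where
  nonneg : ∀ t, 0 ≤ t → 0 ≤ ω t
  mono : MonotoneOn ω (Set.Ici 0)
  subadd : ∀ s t, 0 ≤ s → 0 ≤ t → ω (s + t) ≤ ω s + ω t
  zero : ω 0 = 0
  pos : ∀ t, 0 < t → 0 < ω t
  summable : Summable (fun j : ℕ => ω ((2 : ℝ) ^ (-(j : ℤ))))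

/-- The Dini norm `∑_{j ≥ 0} ω(2^{-j})`. -/
def diniNorm (ω : ℝ → ℝ) : ℝ := ∑' j : ℕ, ω ((2 : ℝ) ^ (-(j : ℤ)))

/-- `K` is a Calderón–Zygmund kernel with size constant `CK` and modulus of continuity `ω`,
relative to the dominating function `lam`. -/
structure IsCZKernel (lam : X → ℝ → ℝ) (K : X → X → ℂ) (CK : ℝ) (ω : ℝ → ℝ) : Prop where
  size : ∀ x y, x ≠ y → ‖K x y‖ ≤ CK / lam x (dist x y)
  smooth : ∀ x x' y, x ≠ y → dist x x' < dist x y / 2 →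
    ‖K x y - K x' y‖ + ‖K y x - K y x'‖ ≤ ω (dist x x' / dist x y) / lam x (dist x y)

/-- The maximal truncation `T^♯ f(x) = sup_{ε > 0} |∫_{d(x,y) > ε} K(x,y) f(y) dμ(y)|`,
valued in `ℝ≥0∞`. -/
noncomputable def Tsharp (μ : Measure X) (K : X → X → ℂ) (f : X → ℂ) (x : X) : ℝ≥0∞ :=
  ⨆ (ε : ℝ) (_ : 0 < ε), ENNReal.ofReal ‖∫ y in (closedBall x ε)ᶜ, K x y * f y ∂μ‖

/-- `T` is an `L²(μ)`-bounded Calderón–Zygmund operator with kernel `K` and `L²` norm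
bound `CT`. -/
structure IsCZOperator (μ : Measure X) (K : X → X → ℂ) (T : (X → ℂ) → X → ℂ) (CT : ℝ) :
    Prop where
  map_add : ∀ f g, MemLp f 2 μ → MemLp g 2 μ → T (f + g) = T f + T g
  map_smul : ∀ (c : ℂ) (f), MemLp f 2 μ → T (c • f) = c • T f
  norm_bound : ∀ f, MemLp f 2 μ → eLpNorm (T f) 2 μ ≤ ENNReal.ofReal CT * eLpNorm f 2 μ
  rep : ∀ f : X → ℂ, (∃ M, ∀ x, ‖f x‖ ≤ M) → Bornology.IsBounded (Function.support f) →
    ∀ x, x ∉ tsupport f → T f x = ∫ y, K x y * f y ∂μ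

/-- A David–Mattila lattice with parameters `C0, A0` associated to `μ`:
for each generation `k` a Borel partition `cells k` of `supp μ`, each cell `Q` carrying a
ball `B(Q) = B(center k Q, radius k Q)`. -/
structure DavidMattila (μ : Measure X) (C0 A0 : ℝ) where
  cells : ℕ → Set (Set X)
  center : ℕ → Set X → X
  radius : ℕ → Set X → ℝ
  measurable : ∀ k, ∀ Q ∈ cells k, MeasurableSet Q
  cover : ∀ k, ⋃₀ cells k = msupport μ
  pairwise_disjoint : ∀ k, ∀ Q ∈ cells k, ∀ R ∈ cells k, Q ≠ R → Disjoint Q R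
  nested : ∀ k l, k < l → ∀ Q ∈ cells l, ∀ R ∈ cells k, Q ⊆ R ∨ Disjoint Q R
  center_mem : ∀ k, ∀ Q ∈ cells k, center k Q ∈ msupport μ
  radius_lb : ∀ k, ∀ Q ∈ cells k, A0 ^ (-(k : ℤ)) ≤ radius k Q
  radius_ub : ∀ k, ∀ Q ∈ cells k, radius k Q ≤ C0 * A0 ^ (-(k : ℤ))
  ball_subset : ∀ k, ∀ Q ∈ cells k, msupport μ ∩ ball (center k Q) (radius k Q) ⊆ Q
  subset_ball : ∀ k, ∀ Q ∈ cells k, Q ⊆ msupport μ ∩ ball (center k Q) (28 * radius k Q)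
  disjoint_five : ∀ k, ∀ Q ∈ cells k, ∀ R ∈ cells k, Q ≠ R →
    Disjoint (ball (center k Q) (5 * radius k Q)) (ball (center k R) (5 * radius k R))
  nondoubling : ∀ k, ∀ Q ∈ cells k,
    ENNReal.ofReal C0 * μ (ball (center k Q) (radius k Q)) <
        μ (ball (center k Q) (100 * radius k Q)) →
      radius k Q = A0 ^ (-(k : ℤ)) ∧
      ∀ c : ℝ, 1 ≤ c → c ≤ C0 →
        ENNReal.ofReal C0 * μ (ball (center k Q) (c * radius k Q)) ≤
          μ (ball (center k Q) (100 * c * radius k Q))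

/-- The average `A(f,Q) = μ(αB(Q))⁻¹ ∫_{30B(Q)} |f| dμ` attached to a ball `B(z,r)`. -/
noncomputable def cellAvg (μ : Measure X) (α : ℝ) (f : X → ℂ) (z : X) (r : ℝ) : ℝ≥0∞ :=
  (∫⁻ y in ball z (30 * r), ‖f y‖₊ ∂μ) / μ (ball z (α * r))

/-- `Θ(Q) = μ(αB(Q)) / λ(z_Q, α r(Q))`. -/
noncomputable def theta (μ : Measure X) (lam : X → ℝ → ℝ) (α : ℝ) (z : X) (r : ℝ) : ℝ≥0∞ :=
  μ (ball z (α * r)) / ENNReal.ofReal (lam z (α * r))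

/-- The maximal function `M_λ f(x) = sup_{R>0} λ(x,R)⁻¹ ∫_{B(x,R)} |f| dμ`. -/
noncomputable def Mlam (μ : Measure X) (lam : X → ℝ → ℝ) (f : X → ℂ) (x : X) : ℝ≥0∞ :=
  ⨆ (R : ℝ) (_ : 0 < R), (∫⁻ y in ball x R, ‖f y‖₊ ∂μ) / ENNReal.ofReal (lam x R)

/-- The localized grand maximal truncated operator `N_{Q₀}`. -/
noncomputable def grandMax (μ : Measure X) {C0 A0 : ℝ} (D : DavidMattila μ C0 A0)
    (K : X → X → ℂ) (Q0 : Set X) (f : X → ℂ) (x : X) : ℝ≥0∞ :=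
  Q0.indicator (fun x' =>
    ⨆ (k : ℕ) (P : Set X) (_ : P ∈ D.cells k) (_ : x' ∈ P) (_ : P ⊆ Q0) (y : X) (_ : y ∈ P),
      ENNReal.ofReal
        ‖∫ z in (ball (D.center k P) (30 * D.radius k P))ᶜ, K y z * f z ∂μ‖) x

/-- `∫_S w dμ` for a weight `w`. -/
noncomputable def wInt (μ : Measure X) (w : X → ℝ) (S : Set X) : ℝ≥0∞ :=
  ∫⁻ x in S, ENNReal.ofReal (w x) ∂μ

end

/-!
Vitali covering argument. Every cell `Q` with `A(f,Q) > t` lies in the ball `30B(Q)`, whose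
radius is at most `30 C₀` since `A₀ ≥ 1`. Choose a disjoint subfamily of these balls such that
every ball of the family meets a chosen one of at least half its radius; then the enlargements
`150B(Q) ⊆ αB(Q)` of the chosen balls cover the level set, and `t μ(αB(Q)) ≤ ∫_{30B(Q)} |f| dμ`
for each of them. Summing over the disjoint chosen balls gives the estimate with `C = 1`.
-/

theorem Set.PairwiseDisjoint.countable_of_measure_pos {ι Ω : Type*} [MeasurableSpace Ω]
    {ν : Measure Ω} [SFinite ν] {u : Set ι} {B : ι → Set Ω} (hd : u.PairwiseDisjoint B)
    (hB : ∀ i ∈ u, MeasurableSet (B i)) (hpos : ∀ i ∈ u, 0 < ν (B i)) : u.Countable := by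
  have hcount := Measure.countable_meas_pos_of_disjoint_iUnion (μ := ν) (As := fun i : u => B i)
    (fun i => hB i i.2) (fun i j hij => hd i.2 j.2 (Subtype.coe_ne_coe.2 hij))
  rw [← Set.countable_coe_iff, ← Set.countable_univ_iff]
  simpa only [fun i : u => hpos i i.2, ofPred_true] using hcount

section

variable {X : Type*} [MetricSpace X]

theorem ball_subset_ball_five_mul_of_nonempty_inter {x y : X} {r r' : ℝ}
    (h : (ball x r ∩ ball y r').Nonempty) (hr : r ≤ 2 * r') : ball x r ⊆ ball y (5 * r') := by
  obtain ⟨w, hwx, hwy⟩ := h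
  intro z hz
  rw [mem_ball] at hwx hwy hz ⊢
  calc dist z y ≤ dist z x + dist x w + dist w y := dist_triangle4 z x w y
    _ < r + r + r' := by gcongr; rwa [dist_comm]
    _ ≤ 5 * r' := by linarith

variable [MeasurableSpace X]

namespace DavidMattila

variable {μ : Measure X} {C0 A0 : ℝ} (D : DavidMattila μ C0 A0) {k : ℕ} {Q : Set X}

theorem radius_pos (hA0 : 0 < A0) (hQ : Q ∈ D.cells k) : 0 < D.radius k Q :=
  (zpow_pos hA0 _).trans_le (D.radius_lb k Q hQ)

theorem radius_le (hC0 : 0 ≤ C0) (hA0 : 1 ≤ A0) (hQ : Q ∈ D.cells k) : D.radius k Q ≤ C0 :=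
  calc D.radius k Q ≤ C0 * A0 ^ (-(k : ℤ)) := D.radius_ub k Q hQ
    _ ≤ C0 * 1 := by gcongr; exact zpow_le_one_of_nonpos₀ hA0 (by simp)
    _ = C0 := mul_one C0

theorem subset_ball_thirty (hQ : Q ∈ D.cells k) : Q ⊆ ball (D.center k Q) (30 * D.radius k Q) :=
  fun x hx => by
    have hx28 := mem_ball.1 (D.subset_ball k Q hQ hx).2
    have : 0 ≤ dist x (D.center k Q) := dist_nonneg
    exact mem_ball.2 (by linarith)

end DavidMattila

variable [OpensMeasurableSpace X]

theorem mul_measure_biUnion_ball_le {ι : Type*} (μ ν : Measure X) [SFinite ν] (s : Set ι)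
    (c : ι → X) (r : ι → ℝ) (R : ℝ) (hR : ∀ i ∈ s, r i ≤ R) {t : ℝ≥0∞} (ht : t ≠ 0)
    (hpos : ∀ i ∈ s, 0 < μ (ball (c i) (5 * r i)))
    (hle : ∀ i ∈ s, t * μ (ball (c i) (5 * r i)) ≤ ν (ball (c i) (r i))) :
    t * μ (⋃ i ∈ s, ball (c i) (r i)) ≤ ν (⋃ i ∈ s, ball (c i) (r i)) := by
  have hr : ∀ i ∈ s, 0 < r i := fun i hi => by
    have := nonempty_ball.1 (nonempty_of_measure_ne_zero (hpos i hi).ne' :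
      (ball (c i) (5 * r i)).Nonempty)
    linarith
  obtain ⟨u, hus, hud, hcover⟩ := Vitali.exists_disjoint_subfamily_covering_enlargement
    (fun i => ball (c i) (r i)) s r 2 one_lt_two (fun i hi => (hr i hi).le) R hR
    (fun i hi => nonempty_ball.2 (hr i hi))
  have hu : u.Countable := hud.countable_of_measure_pos (fun _ _ => measurableSet_ball)
    fun j hj => (ENNReal.mul_pos ht (hpos j (hus hj)).ne').trans_le (hle j (hus hj))
  have hsub : ⋃ i ∈ s, ball (c i) (r i) ⊆ ⋃ j ∈ u, ball (c j) (5 * r j) := by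
    refine iUnion₂_subset fun i hi => ?_
    obtain ⟨j, hj, hij, hrij⟩ := hcover i hi
    exact (ball_subset_ball_five_mul_of_nonempty_inter hij hrij).trans
      (subset_biUnion_of_mem (u := fun j => ball (c j) (5 * r j)) hj)
  calc t * μ (⋃ i ∈ s, ball (c i) (r i))
      ≤ t * ∑' j : u, μ (ball (c j) (5 * r j)) :=
        mul_le_mul_right ((measure_mono hsub).trans (measure_biUnion_le μ hu _)) t
    _ = ∑' j : u, t * μ (ball (c j) (5 * r j)) := ENNReal.tsum_mul_left.symm
    _ ≤ ∑' j : u, ν (ball (c j) (r j)) := ENNReal.tsum_le_tsum fun j => hle j (hus j.2)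
    _ = ν (⋃ j ∈ u, ball (c j) (r j)) :=
        (measure_biUnion hu hud fun _ _ => measurableSet_ball).symm
    _ ≤ ν (⋃ i ∈ s, ball (c i) (r i)) := measure_mono (biUnion_subset_biUnion_left hus)

theorem mul_measure_ball_le_of_lt_cellAvg {μ : Measure X} {α : ℝ} {f : X → ℂ} {z : X} {r : ℝ}
    {t : ℝ≥0∞} (hr : 0 ≤ r) (hα : 150 ≤ α) (h : t < cellAvg μ α f z r) :
    t * μ (ball z (5 * (30 * r))) ≤
      μ.withDensity (fun y => (‖f y‖₊ : ℝ≥0∞)) (ball z (30 * r)) := by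
  rw [withDensity_apply _ measurableSet_ball]
  calc t * μ (ball z (5 * (30 * r))) ≤ t * μ (ball z (α * r)) :=
        mul_le_mul_right (measure_mono (ball_subset_ball (by nlinarith))) t
    _ ≤ ∫⁻ y in ball z (30 * r), ‖f y‖₊ ∂μ := ENNReal.mul_le_of_le_div h.le

end

open MeasureTheory Metric Set ENNReal in
theorem cell_maximal_weak_type_general
    {X : Type*} [MetricSpace X] [MeasurableSpace X] [BorelSpace X]
    (μ : Measure X)
    (C0 A0 : ℝ) (hC0 : 1 < C0) (hA0 : 5000 * C0 < A0)
    (D : DavidMattila μ C0 A0)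
    (α : ℝ) (hα : 200 ≤ α) :
    ∃ C : ℝ, 0 < C ∧
      ∀ f : X → ℂ, Integrable f μ → ∀ t : ℝ, 0 < t →
        μ {x | ENNReal.ofReal t <
            ⨆ (k : ℕ) (Q : Set X) (_ : Q ∈ D.cells k) (_ : x ∈ Q),
              cellAvg μ α f (D.center k Q) (D.radius k Q)} ≤
          ENNReal.ofReal (C / t) * ∫⁻ y, ‖f y‖₊ ∂μ := by
  have hA0_one : 1 ≤ A0 := by nlinarith
  refine ⟨1, one_pos, fun f hf t ht => ?_⟩
  set ν := μ.withDensity (fun y => (‖f y‖₊ : ℝ≥0∞))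
  have : IsFiniteMeasure ν := isFiniteMeasure_withDensity hf.2.ne
  set s : Set (ℕ × Set X) := {p | p.2 ∈ D.cells p.1 ∧
    ENNReal.ofReal t < cellAvg μ α f (D.center p.1 p.2) (D.radius p.1 p.2)}
  have hrad : ∀ p ∈ s, 0 < D.radius p.1 p.2 := fun p hp => D.radius_pos (by linarith) hp.1
  have hlevel : {x | ENNReal.ofReal t < ⨆ (k : ℕ) (Q : Set X) (_ : Q ∈ D.cells k) (_ : x ∈ Q),
      cellAvg μ α f (D.center k Q) (D.radius k Q)} ⊆
      ⋃ p ∈ s, ball (D.center p.1 p.2) (30 * D.radius p.1 p.2) := fun x hx => by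
    simp only [mem_ofPred_eq, lt_iSup_iff] at hx
    obtain ⟨k, Q, hQ, hxQ, hlt⟩ := hx
    exact mem_biUnion (x := (k, Q)) ⟨hQ, hlt⟩ (D.subset_ball_thirty hQ hxQ)
  have ht' : ENNReal.ofReal t ≠ 0 := (ENNReal.ofReal_pos.2 ht).ne'
  have hweak := mul_measure_biUnion_ball_le μ ν s _ _ (30 * C0)
    (fun p hp => by have := D.radius_le (by linarith) hA0_one hp.1; linarith) ht'
    (fun p hp => D.center_mem p.1 p.2 hp.1 _ (by linarith [hrad p hp]))
    (fun p hp => mul_measure_ball_le_of_lt_cellAvg (by linarith [hrad p hp]) (by linarith) hp.2)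
  calc _ ≤ μ (⋃ p ∈ s, ball (D.center p.1 p.2) (30 * D.radius p.1 p.2)) := measure_mono hlevel
    _ ≤ ν univ / ENNReal.ofReal t := by
      rw [ENNReal.le_div_iff_mul_le (Or.inl ht') (Or.inl ofReal_ne_top), mul_comm]
      exact hweak.trans (measure_mono (subset_univ _))
    _ = ENNReal.ofReal (1 / t) * ∫⁻ y, ‖f y‖₊ ∂μ := by
      rw [withDensity_apply _ MeasurableSet.univ, setLIntegral_univ, one_div,
        ENNReal.ofReal_inv_of_pos ht, ENNReal.div_eq_inv_mul]

open MeasureTheory Metric Set ENNReal in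
/-- The maximal operator `M_μ f(x) = sup_{x ∈ Q ∈ D} A(f,Q)` over David–Mattila cells
has weak type `(1,1)`. -/
theorem cell_maximal_weak_type
    {X : Type*} [MetricSpace X] [MeasurableSpace X] [BorelSpace X]
    (μ : Measure X) [IsLocallyFiniteMeasure μ]
    (C0 A0 : ℝ) (hC0 : 1 < C0) (hA0 : 5000 * C0 < A0)
    (D : DavidMattila μ C0 A0)
    (α : ℝ) (hα : 200 ≤ α) :
    ∃ C : ℝ, 0 < C ∧
      ∀ f : X → ℂ, Integrable f μ → ∀ t : ℝ, 0 < t →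
        μ {x | ENNReal.ofReal t <
            ⨆ (k : ℕ) (Q : Set X) (_ : Q ∈ D.cells k) (_ : x ∈ Q),
              cellAvg μ α f (D.center k Q) (D.radius k Q)} ≤
          ENNReal.ofReal (C / t) * ∫⁻ y, ‖f y‖₊ ∂μ :=
  cell_maximal_weak_type_general μ C0 A0 hC0 hA0 D α hα
end

section
/- Let (X,d,μ) be upper doubling with dominating function λ and constant C_λ. Then the maximal operator M_λ f(x) := sup_{R>0} λ(x,R)^{−1} ∫_{B(x,R)} |f| dμ has weak type (1,1): there is a constant C depending only on C_λ such that μ{x : M_λ f(x) > t} ≤ C·‖f‖_{L¹(μ)}/t for all f ∈ L¹(μ) and t > 0. -/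
open MeasureTheory Metric Set ENNReal

/-!
Every point `x` with `M_λ f(x) > t` is the centre of a ball `B(x, R)` with
`t λ(x, R) < ∫_{B(x,R)} |f| dμ`. For radii at most `n`, Vitali's lemma extracts a disjoint
subfamily whose fourfold enlargements cover these points; it is countable because each of its
balls has positive `|f| dμ`-mass, and three halvings of `λ` give
`μ(B̄(x, 4R)) ≤ λ(x, 8R) ≤ C_λ³ λ(x, R)`, so these points have measure at most
`C_λ³ ‖f‖₁ / t`. Letting `n → ∞` gives the theorem with `C = C_λ³`.
-/

section

variable {X : Type*} [MetricSpace X] [MeasurableSpace X]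

theorem measure_le_mul_of_vitali_closedBall [OpensMeasurableSpace X] (μ ν : Measure X)
    [SFinite ν] {A : Set X} {r : X → ℝ} {R : ℝ} {c : ℝ≥0∞} (hr : ∀ a ∈ A, r a ≤ R)
    (hν : ∀ a ∈ A, 0 < ν (ball a (r a)))
    (hμ : ∀ a ∈ A, μ (closedBall a (4 * r a)) ≤ c * ν (ball a (r a))) :
    μ A ≤ c * ν univ := by
  obtain ⟨u, huA, hu_disj, hu_cover⟩ :=
    Vitali.exists_disjoint_subfamily_covering_enlargement_closedBall A id r R hr 4 (by norm_num)
  have hr_pos : ∀ a ∈ A, 0 < r a := fun a ha =>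
    nonempty_ball.1 (nonempty_of_measure_ne_zero (hν a ha).ne')
  have hdisj : Pairwise (Function.onFun Disjoint fun b : u => ball (b : X) (r b)) :=
    fun i j hij => (hu_disj i.2 j.2 (Subtype.coe_injective.ne hij)).mono
      ball_subset_closedBall ball_subset_closedBall
  have hu_count : u.Countable := by
    have := Measure.countable_meas_pos_of_disjoint_iUnion (μ := ν)
      (fun _ => measurableSet_ball) hdisj
    rw [eq_univ_of_forall (s := {b : u | 0 < ν (ball b (r b))}) fun b => hν b (huA b.2),
      countable_univ_iff] at this
    exact countable_coe_iff.1 this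
  have : Countable u := hu_count.to_subtype
  have hA_sub : A ⊆ ⋃ b : u, closedBall (b : X) (4 * r b) := fun a ha => by
    obtain ⟨b, hb, hab⟩ := hu_cover a ha
    exact mem_iUnion.2 ⟨⟨b, hb⟩, hab (mem_closedBall_self (hr_pos a ha).le)⟩
  calc μ A ≤ ∑' b : u, μ (closedBall (b : X) (4 * r b)) :=
        (measure_mono hA_sub).trans (measure_iUnion_le _)
    _ ≤ ∑' b : u, c * ν (ball (b : X) (r b)) :=
        ENNReal.tsum_le_tsum fun b => hμ b (huA b.2)
    _ = c * ν (⋃ b : u, ball (b : X) (r b)) := by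
        rw [ENNReal.tsum_mul_left, measure_iUnion hdisj fun _ => measurableSet_ball]
    _ ≤ c * ν univ := by gcongr; exact subset_univ _

namespace IsUpperDoubling

variable {μ : Measure X} {lam : X → ℝ → ℝ} {Cl : ℝ}

theorem lam_two_pow_mul_le (hud : IsUpperDoubling μ lam Cl) (x : X) {r : ℝ} (hr : 0 < r)
    (k : ℕ) : lam x (2 ^ k * r) ≤ Cl ^ k * lam x r := by
  induction k with
  | zero => simp
  | succ k ih =>
    calc lam x (2 ^ (k + 1) * r) ≤ Cl * lam x (2 ^ (k + 1) * r / 2) :=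
          hud.halving x _ (by positivity)
      _ = Cl * lam x (2 ^ k * r) := by ring_nf
      _ ≤ Cl * (Cl ^ k * lam x r) := by gcongr; linarith [hud.one_lt]
      _ = Cl ^ (k + 1) * lam x r := by ring

theorem measure_closedBall_four_mul_le (hud : IsUpperDoubling μ lam Cl) (x : X) {r : ℝ}
    (hr : 0 < r) : μ (closedBall x (4 * r)) ≤ ENNReal.ofReal (Cl ^ 3 * lam x r) :=
  calc μ (closedBall x (4 * r)) ≤ μ (ball x (2 ^ 3 * r)) :=
        measure_mono (closedBall_subset_ball (by linarith))
    _ ≤ ENNReal.ofReal (lam x (2 ^ 3 * r)) := hud.measure_le x _ (by positivity)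
    _ ≤ ENNReal.ofReal (Cl ^ 3 * lam x r) := ofReal_le_ofReal (hud.lam_two_pow_mul_le x hr 3)

theorem lt_Mlam_iff (hud : IsUpperDoubling μ lam Cl) (f : X → ℂ) (x : X) {s : ℝ≥0∞} :
    s < Mlam μ lam f x ↔ ∃ R, 0 < R ∧
      s * ENNReal.ofReal (lam x R) < ∫⁻ y in ball x R, ‖f y‖₊ ∂μ := by
  simp only [Mlam, lt_iSup_iff, exists_prop]
  refine exists_congr fun R => and_congr_right fun hR => ?_
  exact ENNReal.lt_div_iff_mul_lt (Or.inl (ofReal_pos.2 (hud.lam_pos x R hR)).ne')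
    (Or.inl ofReal_ne_top)

theorem measure_setOf_lt_measure_ball_le [OpensMeasurableSpace X]
    (hud : IsUpperDoubling μ lam Cl) (ν : Measure X) [SFinite ν] {t : ℝ} (ht : 0 < t) (n : ℝ) :
    μ {x | ∃ R, 0 < R ∧ R ≤ n ∧ ENNReal.ofReal t * ENNReal.ofReal (lam x R) < ν (ball x R)} ≤
      ENNReal.ofReal (Cl ^ 3 / t) * ν univ := by
  choose! r hr_pos hr_le hr_lt using fun x (hx : x ∈ {x | ∃ R, 0 < R ∧ R ≤ n ∧
    ENNReal.ofReal t * ENNReal.ofReal (lam x R) < ν (ball x R)}) => hx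
  refine measure_le_mul_of_vitali_closedBall μ ν hr_le (fun a ha => ?_) fun a ha => ?_
  · exact pos_of_gt (hr_lt a ha)
  · have hCl3 : 0 ≤ Cl ^ 3 / t := div_nonneg (pow_nonneg (one_pos.trans hud.one_lt).le 3) ht.le
    calc μ (closedBall a (4 * r a)) ≤ ENNReal.ofReal (Cl ^ 3 * lam a (r a)) :=
          hud.measure_closedBall_four_mul_le a (hr_pos a ha)
      _ = ENNReal.ofReal (Cl ^ 3 / t) * (ENNReal.ofReal t * ENNReal.ofReal (lam a (r a))) := by
          rw [← ofReal_mul ht.le, ← ofReal_mul hCl3]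
          congr 1; field_simp
      _ ≤ ENNReal.ofReal (Cl ^ 3 / t) * ν (ball a (r a)) := by gcongr; exact (hr_lt a ha).le

end IsUpperDoubling

end

open MeasureTheory Metric Set ENNReal in
theorem Mlam_weak_type_general
    {X : Type*} [MetricSpace X] [MeasurableSpace X] [BorelSpace X]
    (μ : Measure X)
    (lam : X → ℝ → ℝ) (Cl : ℝ) (hud : IsUpperDoubling μ lam Cl) :
    ∃ C : ℝ, 0 < C ∧
      ∀ f : X → ℂ, Integrable f μ → ∀ t : ℝ, 0 < t →
        μ {x | ENNReal.ofReal t < Mlam μ lam f x} ≤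
          ENNReal.ofReal (C / t) * ∫⁻ y, ‖f y‖₊ ∂μ := by
  refine ⟨Cl ^ 3, pow_pos (one_pos.trans hud.one_lt) 3, fun f hf t ht => ?_⟩
  let ν := μ.withDensity fun y => (‖f y‖₊ : ℝ≥0∞)
  have : IsFiniteMeasure ν := isFiniteMeasure_withDensity hf.2.ne
  let A : ℕ → Set X := fun n => {x | ∃ R : ℝ, 0 < R ∧ R ≤ n ∧
    ENNReal.ofReal t * ENNReal.ofReal (lam x R) < ν (ball x R)}
  have hA_mono : Monotone A := fun m n hmn x ⟨R, hR, hRm, hlt⟩ =>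
    ⟨R, hR, hRm.trans (Nat.cast_le.2 hmn), hlt⟩
  have hA_cover : {x | ENNReal.ofReal t < Mlam μ lam f x} ⊆ ⋃ n, A n := fun x hx => by
    obtain ⟨R, hR, hlt⟩ := (hud.lt_Mlam_iff f x).1 hx
    obtain ⟨n, hn⟩ := exists_nat_ge R
    exact mem_iUnion.2 ⟨n, R, hR, hn, by rwa [withDensity_apply _ measurableSet_ball]⟩
  calc μ {x | ENNReal.ofReal t < Mlam μ lam f x} ≤ ⨆ n, μ (A n) :=
        (measure_mono hA_cover).trans_eq hA_mono.measure_iUnion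
    _ ≤ ENNReal.ofReal (Cl ^ 3 / t) * ν univ :=
        iSup_le fun n => hud.measure_setOf_lt_measure_ball_le ν ht n
    _ = ENNReal.ofReal (Cl ^ 3 / t) * ∫⁻ y, ‖f y‖₊ ∂μ := by
        rw [withDensity_apply _ MeasurableSet.univ, Measure.restrict_univ]

open MeasureTheory Metric Set ENNReal in
/-- The maximal operator `M_λ` associated to the dominating function of an upper
doubling measure has weak type `(1,1)`, with constant depending only on `C_λ`. -/
theorem Mlam_weak_type
    {X : Type*} [MetricSpace X] [MeasurableSpace X] [BorelSpace X]
    (μ : Measure X) [IsLocallyFiniteMeasure μ]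
    (lam : X → ℝ → ℝ) (Cl : ℝ) (hud : IsUpperDoubling μ lam Cl) :
    ∃ C : ℝ, 0 < C ∧
      ∀ f : X → ℂ, Integrable f μ → ∀ t : ℝ, 0 < t →
        μ {x | ENNReal.ofReal t < Mlam μ lam f x} ≤
          ENNReal.ofReal (C / t) * ∫⁻ y, ‖f y‖₊ ∂μ :=
  Mlam_weak_type_general μ lam Cl hud
end

section
/- Let (X,d,μ) be upper doubling with dominating function λ and constant C_λ, let D be a David–Mattila lattice with parameters C_0, A_0, and let α ≥ 200. Then there is a constant C depending only on C_λ, C_0, A_0, α such that for every cell Q₀ ∈ D_0, every integrable f supported on 30B(Q₀), and every x ∈ Q₀: M_λ f(x) ≤ C·sup over cells Q ∈ D with x ∈ Q of Θ(Q)·A(f,Q), where M_λ f(x) := sup_{R>0} λ(x,R)^{−1}∫_{B(x,R)}|f|dμ, Θ(Q) := μ(αB(Q))/λ(z_Q, α·r(Q)) and A(f,Q) := μ(αB(Q))^{−1}∫_{30B(Q)}|f|dμ. -/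
/-!
Given `R > 0`, pick a cell `Q ∋ x` whose enlarged ball `30B(Q)` captures all of `|f|` on
`B(x, R)` while `α r(Q) ≲ R`: the top cell `Q₀` when `R > 2` (because `f` lives on
`30B(Q₀)`), and otherwise the cell of the generation `k` with `A₀^{-k-1} < R/2 ≤ A₀^{-k}`.
Since `x ∈ Q ⊆ 28B(Q)` and `α ≥ 28`, one `λ`-comparison of centres and `m` halvings give
`λ(z_Q, α r(Q)) ≤ C_λ^{m+1} λ(x, R)` with `2^m > α C₀ A₀`, and
`Θ(Q) A(f,Q) = λ(z_Q, α r(Q))⁻¹ ∫_{30B(Q)} |f| dμ` because `0 < μ(αB(Q)) < ∞`.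
-/

open MeasureTheory Metric Set ENNReal

theorem ENNReal.div_le_mul_div_of_le_mul {a b c l l' : ℝ≥0∞} (hc₀ : c ≠ 0) (hc : c ≠ ∞)
    (hab : a ≤ b) (hl : l' ≤ c * l) : a / l ≤ c * (b / l') :=
  calc a / l = c * a / (c * l) := (ENNReal.mul_div_mul_left _ _ hc₀ hc).symm
    _ ≤ c * b / l' := ENNReal.div_le_div (mul_le_mul_right hab c) hl
    _ = c * (b / l') := mul_div_assoc _ _ _

theorem exists_nat_zpow_neg_lt_and_le {A t : ℝ} (hA : 1 < A) (ht₀ : 0 < t) (ht : t ≤ 1) :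
    ∃ k : ℕ, A ^ (-((k : ℤ) + 1)) < t ∧ t ≤ A ^ (-(k : ℤ)) := by
  obtain ⟨n, hn_lt, hn_le⟩ := exists_mem_Ioc_zpow ht₀ hA
  have hn : n < 0 := by
    by_contra! h
    exact (hn_lt.trans_le ht).not_ge (one_le_zpow₀ hA.le h)
  refine ⟨(-(n + 1)).toNat, ?_, ?_⟩
  · rwa [Int.toNat_of_nonneg (by omega), show -(-(n + 1) + 1) = n by ring]
  · rwa [Int.toNat_of_nonneg (by omega), neg_neg]

section

variable {X : Type*} [MetricSpace X] [MeasurableSpace X] {μ : Measure X}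

namespace IsUpperDoubling

variable {lam : X → ℝ → ℝ} {Cl : ℝ}

theorem measure_ball_ne_top (hud : IsUpperDoubling μ lam Cl) (x : X) {r : ℝ} (hr : 0 < r) :
    μ (ball x r) ≠ ∞ :=
  ((hud.measure_le x r hr).trans_lt ofReal_lt_top).ne

theorem lam_le_pow_mul_lam_div_two_pow (hud : IsUpperDoubling μ lam Cl) (x : X) (n : ℕ)
    {r : ℝ} (hr : 0 < r) : lam x r ≤ Cl ^ n * lam x (r / 2 ^ n) := by
  induction n with
  | zero => simp
  | succ n ih =>
    calc lam x r ≤ Cl ^ n * lam x (r / 2 ^ n) := ih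
      _ ≤ Cl ^ n * (Cl * lam x (r / 2 ^ n / 2)) := by
        gcongr
        · exact pow_nonneg (zero_le_one.trans hud.one_lt.le) n
        · exact hud.halving x _ (by positivity)
      _ = Cl ^ (n + 1) * lam x (r / 2 ^ (n + 1)) := by
        rw [pow_succ (2 : ℝ), ← div_div]; ring

theorem lam_le_pow_succ_mul_of_dist_le (hud : IsUpperDoubling μ lam Cl) {x z : X} {s R : ℝ}
    {m : ℕ} (hs : 0 < s) (hzx : dist z x ≤ s) (hsR : s ≤ 2 ^ m * R) :
    lam z s ≤ Cl ^ (m + 1) * lam x R := by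
  have hCl : 0 ≤ Cl := zero_le_one.trans hud.one_lt.le
  calc lam z s ≤ Cl * lam x s := hud.close z x s hs hzx
    _ ≤ Cl * (Cl ^ m * lam x (s / 2 ^ m)) := by
      gcongr; exact hud.lam_le_pow_mul_lam_div_two_pow x m hs
    _ ≤ Cl * (Cl ^ m * lam x R) := by
      gcongr
      exact hud.lam_mono x _ _ (by positivity) ((div_le_iff₀' (by positivity)).2 hsR)
    _ = Cl ^ (m + 1) * lam x R := by ring

end IsUpperDoubling

theorem theta_mul_cellAvg {lam : X → ℝ → ℝ} {α : ℝ} {f : X → ℂ} {z : X} {r : ℝ}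
    (h₀ : μ (ball z (α * r)) ≠ 0) (h : μ (ball z (α * r)) ≠ ∞) :
    theta μ lam α z r * cellAvg μ α f z r =
      (∫⁻ y in ball z (30 * r), ‖f y‖₊ ∂μ) / ENNReal.ofReal (lam z (α * r)) := by
  simp only [theta, cellAvg, div_eq_mul_inv]
  rw [mul_comm, mul_assoc, ← mul_assoc _ (μ _), ENNReal.inv_mul_cancel h₀ h, one_mul]

namespace DavidMattila

variable {C0 A0 : ℝ} (D : DavidMattila μ C0 A0)

theorem ball_subset_ball_thirty {k : ℕ} {Q : Set X} (hQ : Q ∈ D.cells k) {x : X} (hx : x ∈ Q)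
    {R : ℝ} (hR : R ≤ 2 * D.radius k Q) :
    ball x R ⊆ ball (D.center k Q) (30 * D.radius k Q) := by
  refine ball_subset_ball' ?_
  have := mem_ball.1 (D.subset_ball k Q hQ hx).2
  linarith

theorem exists_cell_ball_subset_of_le_two (hC0 : 0 ≤ C0) (hA0 : 1 < A0) {x : X}
    (hx : x ∈ msupport μ) {R : ℝ} (hR : 0 < R) (hR2 : R ≤ 2) :
    ∃ (k : ℕ) (Q : Set X), Q ∈ D.cells k ∧ x ∈ Q ∧
      ball x R ⊆ ball (D.center k Q) (30 * D.radius k Q) ∧ D.radius k Q ≤ C0 * A0 * R := by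
  obtain ⟨k, hk_lt, hk_le⟩ := exists_nat_zpow_neg_lt_and_le hA0 (half_pos hR) (by linarith)
  rw [← D.cover k] at hx
  obtain ⟨Q, hQ, hxQ⟩ := hx
  have hzpow : A0 ^ (-(k : ℤ)) = A0 * A0 ^ (-((k : ℤ) + 1)) := by
    rw [← zpow_one_add₀ (by positivity)]; ring_nf
  refine ⟨k, Q, hQ, hxQ, D.ball_subset_ball_thirty hQ hxQ ?_, ?_⟩
  · linarith [D.radius_lb k Q hQ]
  · calc D.radius k Q ≤ C0 * (A0 * A0 ^ (-((k : ℤ) + 1))) := hzpow ▸ D.radius_ub k Q hQ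
      _ ≤ C0 * (A0 * R) := by gcongr; linarith
      _ = C0 * A0 * R := by ring

theorem exists_cell_lintegral_ball_le (hC0 : 0 ≤ C0) (hA0 : 1 < A0) {Q₀ : Set X}
    (hQ₀ : Q₀ ∈ D.cells 0) {f : X → ℂ}
    (hf : Function.support f ⊆ ball (D.center 0 Q₀) (30 * D.radius 0 Q₀))
    {x : X} (hx : x ∈ Q₀) {R : ℝ} (hR : 0 < R) :
    ∃ (k : ℕ) (Q : Set X), Q ∈ D.cells k ∧ x ∈ Q ∧
      ∫⁻ y in ball x R, ‖f y‖₊ ∂μ ≤ ∫⁻ y in ball (D.center k Q) (30 * D.radius k Q), ‖f y‖₊ ∂μ ∧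
      D.radius k Q ≤ C0 * A0 * R := by
  rcases le_or_gt R 2 with hR2 | hR2
  · obtain ⟨k, Q, hQ, hxQ, hball, hr⟩ :=
      D.exists_cell_ball_subset_of_le_two hC0 hA0 (D.subset_ball 0 Q₀ hQ₀ hx).1 hR hR2
    exact ⟨k, Q, hQ, hxQ, lintegral_mono_set hball, hr⟩
  refine ⟨0, Q₀, hQ₀, hx, ?_, ?_⟩
  · rw [setLIntegral_eq_of_support_subset (fun y hy => hf (by simpa using hy))]
    exact setLIntegral_le_lintegral _ _
  · calc D.radius 0 Q₀ ≤ C0 := by simpa using D.radius_ub 0 Q₀ hQ₀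
      _ ≤ C0 * (A0 * R) := le_mul_of_one_le_right hC0 (by nlinarith)
      _ = C0 * A0 * R := by ring

end DavidMattila

end

open MeasureTheory Metric Set ENNReal in
theorem Mlam_dominated_by_cell_sup_general
    {X : Type*} [MetricSpace X] [MeasurableSpace X]
    (μ : Measure X)
    (lam : X → ℝ → ℝ) (Cl : ℝ) (hud : IsUpperDoubling μ lam Cl)
    (C0 A0 : ℝ) (hC0 : 1 < C0) (hA0 : 5000 * C0 < A0)
    (D : DavidMattila μ C0 A0)
    (α : ℝ) (hα : 200 ≤ α) :
    ∃ C : ℝ, 0 < C ∧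
      ∀ Q₀ ∈ D.cells 0,
        ∀ f : X → ℂ, Integrable f μ →
          Function.support f ⊆ ball (D.center 0 Q₀) (30 * D.radius 0 Q₀) →
          ∀ x ∈ Q₀,
            Mlam μ lam f x ≤ ENNReal.ofReal C *
              ⨆ (k : ℕ) (Q : Set X) (_ : Q ∈ D.cells k) (_ : x ∈ Q),
                theta μ lam α (D.center k Q) (D.radius k Q) *
                  cellAvg μ α f (D.center k Q) (D.radius k Q) := by
  have hA0' : 1 < A0 := by linarith
  obtain ⟨m, hm⟩ := pow_unbounded_of_one_lt (α * (C0 * A0)) one_lt_two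
  have hC : 0 < Cl ^ (m + 1) := pow_pos (zero_lt_one.trans hud.one_lt) _
  refine ⟨Cl ^ (m + 1), hC, fun Q₀ hQ₀ f _ hsupp x hx => iSup₂_le fun R hR => ?_⟩
  obtain ⟨k, Q, hQ, hxQ, hI, hr⟩ :=
    D.exists_cell_lintegral_ball_le (by linarith) hA0' hQ₀ hsupp hx hR
  have hr₀ : 0 < D.radius k Q := (_root_.zpow_pos (by linarith) _).trans_le (D.radius_lb k Q hQ)
  have hαr : 0 < α * D.radius k Q := by positivity
  have hlam : lam (D.center k Q) (α * D.radius k Q) ≤ Cl ^ (m + 1) * lam x R := by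
    refine hud.lam_le_pow_succ_mul_of_dist_le hαr ?_ ?_
    · rw [dist_comm]
      nlinarith [mem_ball.1 (D.subset_ball k Q hQ hxQ).2]
    · nlinarith
  calc (∫⁻ y in ball x R, ‖f y‖₊ ∂μ) / ENNReal.ofReal (lam x R)
      ≤ ENNReal.ofReal (Cl ^ (m + 1)) * ((∫⁻ y in ball (D.center k Q) (30 * D.radius k Q),
          ‖f y‖₊ ∂μ) / ENNReal.ofReal (lam (D.center k Q) (α * D.radius k Q))) := by
        refine ENNReal.div_le_mul_div_of_le_mul (by simpa using hC) ofReal_ne_top hI ?_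
        rw [← ENNReal.ofReal_mul hC.le]
        exact ENNReal.ofReal_le_ofReal hlam
    _ = ENNReal.ofReal (Cl ^ (m + 1)) * (theta μ lam α (D.center k Q) (D.radius k Q) *
          cellAvg μ α f (D.center k Q) (D.radius k Q)) := by
        rw [theta_mul_cellAvg (D.center_mem k Q hQ _ hαr).ne' (hud.measure_ball_ne_top _ hαr)]
    _ ≤ _ := by
        gcongr
        exact le_iSup₂_of_le k Q (le_iSup₂_of_le hQ hxQ le_rfl)

open MeasureTheory Metric Set ENNReal in
/-- Pointwise domination of `M_λ f` by the sup of `Θ(Q) A(f,Q)` over David–Mattila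
cells containing the point, for `f` supported on `30B(Q₀)` with `Q₀` a top generation
cell. -/
theorem Mlam_dominated_by_cell_sup
    {X : Type*} [MetricSpace X] [MeasurableSpace X] [BorelSpace X]
    (μ : Measure X) [IsLocallyFiniteMeasure μ]
    (lam : X → ℝ → ℝ) (Cl : ℝ) (hud : IsUpperDoubling μ lam Cl)
    (C0 A0 : ℝ) (hC0 : 1 < C0) (hA0 : 5000 * C0 < A0)
    (D : DavidMattila μ C0 A0)
    (α : ℝ) (hα : 200 ≤ α) :
    ∃ C : ℝ, 0 < C ∧
      ∀ Q₀ ∈ D.cells 0,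
        ∀ f : X → ℂ, Integrable f μ →
          Function.support f ⊆ ball (D.center 0 Q₀) (30 * D.radius 0 Q₀) →
          ∀ x ∈ Q₀,
            Mlam μ lam f x ≤ ENNReal.ofReal C *
              ⨆ (k : ℕ) (Q : Set X) (_ : Q ∈ D.cells k) (_ : x ∈ Q),
                theta μ lam α (D.center k Q) (D.radius k Q) *
                  cellAvg μ α f (D.center k Q) (D.radius k Q) :=
  Mlam_dominated_by_cell_sup_general μ lam Cl hud C0 A0 hC0 hA0 D α hα
end
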